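/- arXiv:1608.03754 — 8 statements merged into one kernel-verified Lean document; each statement's English description precedes it below -/
import Mathlib

section
/- Let G be a group and H ≤ G a subgroup. Then the set E = H\G/H of (H,H)-double cosets, equipped with the hyperoperation C(g₁) ∘ C(g₂) = {C(g₁ h g₂) : h ∈ H}, the scalar identity C(1) = H, and inversion C(g)‾ = C(g⁻¹), is a polygroup. -/
/-!
`HaH · HbH` is a union of double cosets, namely of the `H(ahb)H` with `h ∈ H`; so the
hyperproduct of two double cosets can be taken to be the set of double cosets contained in
their setwise product, and inversion to be setwise inversion. Every axiom then reduces to an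
identity between representatives, e.g. `y = p (x h g) q` rewrites as `x = p⁻¹ (y q⁻¹ g⁻¹) h⁻¹`
for the division axioms.
-/

/-- A polygroup (quasicanonical hypergroup): a nonempty-valued hyperoperation that is
associative, satisfies the reproduction axiom, has a scalar identity `e`, and an
inversion `inv` with `b/a = b ∘ ā` and `a\b = ā ∘ b`. -/
structure Polygroup (E : Type*) where
  hmul : E → E → Set E
  e : E
  inv : E → E
  hmul_nonempty : ∀ a b : E, (hmul a b).Nonempty
  hmul_assoc : ∀ a b c : E, (⋃ u ∈ hmul b c, hmul a u) = ⋃ v ∈ hmul a b, hmul v c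
  repro_left : ∀ a : E, (⋃ x : E, hmul x a) = Set.univ
  repro_right : ∀ a : E, (⋃ x : E, hmul a x) = Set.univ
  hmul_e : ∀ a : E, hmul a e = {a}
  e_hmul : ∀ a : E, hmul e a = {a}
  div_eq : ∀ a b : E, {x : E | b ∈ hmul x a} = hmul b (inv a)
  ldiv_eq : ∀ a b : E, {x : E | b ∈ hmul a x} = hmul (inv a) b

/-- The double coset `HgH`. -/
def DC {G : Type*} [Group G] (H : Subgroup G) (g : G) : Set G :=
  {x : G | ∃ h₁ ∈ H, ∃ h₂ ∈ H, x = h₁ * g * h₂}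

open DoubleCoset
open scoped Pointwise

section

variable {G : Type*} [Group G] (H : Subgroup G)

theorem DC_eq_doubleCoset (g : G) : DC H g = doubleCoset g H H := by
  ext x
  exact mem_doubleCoset.symm

theorem mem_DC_self (g : G) : g ∈ DC H g :=
  ⟨1, H.one_mem, 1, H.one_mem, by group⟩

theorem DC_eq_DC_iff {a b : G} : DC H a = DC H b ↔ b ∈ DC H a := by
  refine ⟨fun h => h ▸ mem_DC_self H b, fun h => ?_⟩
  simp only [DC_eq_doubleCoset] at h ⊢
  exact (doubleCoset_eq_of_mem h).symm

theorem DC_inv (g : G) : (DC H g)⁻¹ = DC H g⁻¹ := by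
  simp only [DC_eq_doubleCoset, doubleCoset, mul_inv_rev, Set.inv_singleton, inv_coe_set,
    mul_assoc]

abbrev DoubleCosets := {s : Set G // ∃ g : G, s = DC H g}

namespace DoubleCosets

def mk (g : G) : DoubleCosets H := ⟨DC H g, g, rfl⟩

theorem exists_eq_mk (C : DoubleCosets H) : ∃ g, C = mk H g :=
  let ⟨g, hg⟩ := C.2
  ⟨g, Subtype.ext hg⟩

theorem mk_eq_mk_iff {a b : G} : mk H a = mk H b ↔ b ∈ DC H a :=
  Subtype.ext_iff.trans (DC_eq_DC_iff H)

variable {H} in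
theorem mk_mul_mul {p q : G} (hp : p ∈ H) (hq : q ∈ H) (g : G) :
    mk H (p * g * q) = mk H g :=
  ((mk_eq_mk_iff H).2 ⟨p, hp, q, hq, rfl⟩).symm

def hmul (C₁ C₂ : DoubleCosets H) : Set (DoubleCosets H) :=
  {C | C.1 ⊆ C₁.1 * C₂.1}

def inv (C : DoubleCosets H) : DoubleCosets H :=
  ⟨C.1⁻¹, by
    obtain ⟨g, hg⟩ := C.2
    exact ⟨g⁻¹, by rw [hg, DC_inv]⟩⟩

theorem inv_mk (g : G) : inv H (mk H g) = mk H g⁻¹ :=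
  Subtype.ext (DC_inv H g)

theorem mem_hmul_mk_iff {a b : G} {C : DoubleCosets H} :
    C ∈ hmul H (mk H a) (mk H b) ↔ ∃ h ∈ H, C = mk H (a * h * b) := by
  obtain ⟨x, rfl⟩ := exists_eq_mk H C
  constructor
  · intro hx
    obtain ⟨_, ⟨p, hp, q, hq, rfl⟩, _, ⟨r, hr, s, hs, rfl⟩, rfl⟩ :=
      Set.mem_mul.1 (hx (mem_DC_self H x))
    refine ⟨q * r, H.mul_mem hq hr, ?_⟩
    rw [← mk_mul_mul hp hs (a * (q * r) * b)]
    congr 1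
    group
  · rintro ⟨h, hh, e⟩ y ⟨p, hp, q, hq, rfl⟩
    obtain ⟨u, hu, v, hv, rfl⟩ := (mk_eq_mk_iff H).1 e.symm
    exact Set.mem_mul.2 ⟨p * u * a * h, ⟨p * u, H.mul_mem hp hu, h, hh, rfl⟩,
      b * v * q, ⟨1, H.one_mem, v * q, H.mul_mem hv hq, by group⟩, by group⟩

theorem hmul_nonempty (C₁ C₂ : DoubleCosets H) : (hmul H C₁ C₂).Nonempty := by
  obtain ⟨a, rfl⟩ := exists_eq_mk H C₁
  obtain ⟨b, rfl⟩ := exists_eq_mk H C₂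
  exact ⟨mk H (a * 1 * b), (mem_hmul_mk_iff H).2 ⟨1, H.one_mem, rfl⟩⟩

theorem mem_biUnion_hmul_left_iff {a b c : G} {C : DoubleCosets H} :
    C ∈ ⋃ u ∈ hmul H (mk H b) (mk H c), hmul H (mk H a) u ↔
      ∃ h ∈ H, ∃ h' ∈ H, C = mk H (a * h * b * h' * c) := by
  simp only [Set.mem_iUnion, exists_prop, mem_hmul_mk_iff]
  constructor
  · rintro ⟨_, ⟨h', hh', rfl⟩, hC⟩
    obtain ⟨h, hh, rfl⟩ := (mem_hmul_mk_iff H).1 hC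
    exact ⟨h, hh, h', hh', by simp only [mul_assoc]⟩
  · rintro ⟨h, hh, h', hh', rfl⟩
    exact ⟨_, ⟨h', hh', rfl⟩, (mem_hmul_mk_iff H).2 ⟨h, hh, by simp only [mul_assoc]⟩⟩

theorem mem_biUnion_hmul_right_iff {a b c : G} {C : DoubleCosets H} :
    C ∈ ⋃ v ∈ hmul H (mk H a) (mk H b), hmul H v (mk H c) ↔
      ∃ h ∈ H, ∃ h' ∈ H, C = mk H (a * h * b * h' * c) := by
  simp only [Set.mem_iUnion, exists_prop, mem_hmul_mk_iff]
  constructor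
  · rintro ⟨_, ⟨h, hh, rfl⟩, hC⟩
    obtain ⟨h', hh', rfl⟩ := (mem_hmul_mk_iff H).1 hC
    exact ⟨h, hh, h', hh', rfl⟩
  · rintro ⟨h, hh, h', hh', rfl⟩
    exact ⟨_, ⟨h, hh, rfl⟩, (mem_hmul_mk_iff H).2 ⟨h', hh', rfl⟩⟩

theorem hmul_assoc (C₁ C₂ C₃ : DoubleCosets H) :
    ⋃ u ∈ hmul H C₂ C₃, hmul H C₁ u = ⋃ v ∈ hmul H C₁ C₂, hmul H v C₃ := by
  obtain ⟨a, rfl⟩ := exists_eq_mk H C₁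
  obtain ⟨b, rfl⟩ := exists_eq_mk H C₂
  obtain ⟨c, rfl⟩ := exists_eq_mk H C₃
  ext C
  rw [mem_biUnion_hmul_left_iff, mem_biUnion_hmul_right_iff]

theorem iUnion_hmul_left_eq_univ (C₁ : DoubleCosets H) : ⋃ C₂, hmul H C₂ C₁ = Set.univ := by
  obtain ⟨a, rfl⟩ := exists_eq_mk H C₁
  refine Set.eq_univ_of_forall fun C => Set.mem_iUnion.2 ?_
  obtain ⟨x, rfl⟩ := exists_eq_mk H C
  exact ⟨mk H (x * a⁻¹), (mem_hmul_mk_iff H).2 ⟨1, H.one_mem, by group⟩⟩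

theorem iUnion_hmul_right_eq_univ (C₁ : DoubleCosets H) : ⋃ C₂, hmul H C₁ C₂ = Set.univ := by
  obtain ⟨a, rfl⟩ := exists_eq_mk H C₁
  refine Set.eq_univ_of_forall fun C => Set.mem_iUnion.2 ?_
  obtain ⟨x, rfl⟩ := exists_eq_mk H C
  exact ⟨mk H (a⁻¹ * x), (mem_hmul_mk_iff H).2 ⟨1, H.one_mem, by group⟩⟩

theorem hmul_mk_one (C : DoubleCosets H) : hmul H C (mk H 1) = {C} := by
  obtain ⟨a, rfl⟩ := exists_eq_mk H C
  ext C
  rw [mem_hmul_mk_iff, Set.mem_singleton_iff]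
  constructor
  · rintro ⟨h, hh, rfl⟩
    simpa using mk_mul_mul H.one_mem hh a
  · rintro rfl
    exact ⟨1, H.one_mem, by group⟩

theorem mk_one_hmul (C : DoubleCosets H) : hmul H (mk H 1) C = {C} := by
  obtain ⟨a, rfl⟩ := exists_eq_mk H C
  ext C
  rw [mem_hmul_mk_iff, Set.mem_singleton_iff]
  constructor
  · rintro ⟨h, hh, rfl⟩
    simpa using mk_mul_mul hh H.one_mem a
  · rintro rfl
    exact ⟨1, H.one_mem, by group⟩

theorem mk_mem_hmul_mk_inv_of_mem {x y g : G} (hy : mk H y ∈ hmul H (mk H x) (mk H g)) :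
    mk H x ∈ hmul H (mk H y) (mk H g⁻¹) := by
  obtain ⟨h, hh, e⟩ := (mem_hmul_mk_iff H).1 hy
  obtain ⟨p, hp, q, hq, rfl⟩ := (mk_eq_mk_iff H).1 e.symm
  refine (mem_hmul_mk_iff H).2 ⟨q⁻¹, H.inv_mem hq, ?_⟩
  rw [show p * (x * h * g) * q * q⁻¹ * g⁻¹ = p * x * h by group, mk_mul_mul hp hh]

theorem mk_mem_inv_hmul_mk_of_mem {x y g : G} (hy : mk H y ∈ hmul H (mk H g) (mk H x)) :
    mk H x ∈ hmul H (mk H g⁻¹) (mk H y) := by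
  obtain ⟨h, hh, e⟩ := (mem_hmul_mk_iff H).1 hy
  obtain ⟨p, hp, q, hq, rfl⟩ := (mk_eq_mk_iff H).1 e.symm
  refine (mem_hmul_mk_iff H).2 ⟨p⁻¹, H.inv_mem hp, ?_⟩
  rw [show g⁻¹ * p⁻¹ * (p * (g * h * x) * q) = h * x * q by group, mk_mul_mul hh hq]

theorem setOf_mem_hmul_eq_hmul_inv (C₁ C₂ : DoubleCosets H) :
    {C | C₂ ∈ hmul H C C₁} = hmul H C₂ (inv H C₁) := by
  obtain ⟨g, rfl⟩ := exists_eq_mk H C₁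
  obtain ⟨y, rfl⟩ := exists_eq_mk H C₂
  ext C
  obtain ⟨x, rfl⟩ := exists_eq_mk H C
  rw [inv_mk]
  exact ⟨mk_mem_hmul_mk_inv_of_mem H, fun h => by simpa using mk_mem_hmul_mk_inv_of_mem H h⟩

theorem setOf_mem_hmul_eq_inv_hmul (C₁ C₂ : DoubleCosets H) :
    {C | C₂ ∈ hmul H C₁ C} = hmul H (inv H C₁) C₂ := by
  obtain ⟨g, rfl⟩ := exists_eq_mk H C₁
  obtain ⟨y, rfl⟩ := exists_eq_mk H C₂
  ext C
  obtain ⟨x, rfl⟩ := exists_eq_mk H C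
  rw [inv_mk]
  exact ⟨mk_mem_inv_hmul_mk_of_mem H, fun h => by simpa using mk_mem_inv_hmul_mk_of_mem H h⟩

def polygroup : Polygroup (DoubleCosets H) where
  hmul := hmul H
  e := mk H 1
  inv := inv H
  hmul_nonempty := hmul_nonempty H
  hmul_assoc := hmul_assoc H
  repro_left := iUnion_hmul_left_eq_univ H
  repro_right := iUnion_hmul_right_eq_univ H
  hmul_e := hmul_mk_one H
  e_hmul := mk_one_hmul H
  div_eq := setOf_mem_hmul_eq_hmul_inv H
  ldiv_eq := setOf_mem_hmul_eq_inv_hmul H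

end DoubleCosets

end

open DoubleCosets in
theorem doubleCoset_polygroup {G : Type*} [Group G] (H : Subgroup G) :
    ∃ P : Polygroup {s : Set G // ∃ g : G, s = DC H g},
      (∀ (g₁ g₂ : G) (C₁ C₂ : {s : Set G // ∃ g : G, s = DC H g}),
          C₁.1 = DC H g₁ → C₂.1 = DC H g₂ →
          P.hmul C₁ C₂ = {C : {s : Set G // ∃ g : G, s = DC H g} |
            ∃ h ∈ H, C.1 = DC H (g₁ * h * g₂)}) ∧
      P.e.1 = DC H 1 ∧
      ∀ (g : G) (C : {s : Set G // ∃ g : G, s = DC H g}),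
        C.1 = DC H g → (P.inv C).1 = DC H g⁻¹ := by
  refine ⟨polygroup H, fun g₁ g₂ C₁ C₂ e₁ e₂ => ?_, rfl, fun g C e => ?_⟩
  · obtain rfl : C₁ = mk H g₁ := Subtype.ext e₁
    obtain rfl : C₂ = mk H g₂ := Subtype.ext e₂
    ext C
    exact (mem_hmul_mk_iff H).trans (exists_congr fun _ => and_congr_right' Subtype.ext_iff)
  · obtain rfl : C = mk H g := Subtype.ext e
    exact congrArg Subtype.val (inv_mk H g)
end

section
/- Let Λ be a totally ordered abelian group and Λ₊ its nonnegative cone. Define a hyperoperation on Λ₊ by α ∘ β = {α + β − 2γ : 0 ≤ γ ≤ min(α, β)}. Then (Λ₊, ∘) is a commutative polygroup with scalar identity 0 and with each element its own inverse. -/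
/-!
The hyperproduct `α ∘ β` is the set of lengths `x` such that `α`, `β`, `x` are the three
distances between the endpoints of a tripod with legs in `Λ₊`. This description is invariant
under all permutations of `(α, β, x)`, which gives commutativity and shows that every element is
its own inverse. For associativity, `α ∘ (β ∘ γ)` is the set of all `α + β + γ - 2s` with `s`
subject to conditions symmetric in `α, β, γ`, so it equals `γ ∘ (β ∘ α) = (α ∘ β) ∘ γ`.
-/

section Tripod

variable {M : Type*} [AddCommMonoid M] [Preorder M]

/-- The pairwise distances between the endpoints of a tripod with legs `p, q, r`. -/
def Tripod (a b c : M) : Prop :=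
  ∃ p q r : M, 0 ≤ p ∧ 0 ≤ q ∧ 0 ≤ r ∧ a = q + r ∧ b = r + p ∧ c = p + q

theorem Tripod.swap {a b c : M} : Tripod a b c → Tripod b a c := by
  rintro ⟨p, q, r, hp, hq, hr, rfl, rfl, rfl⟩
  exact ⟨q, p, r, hq, hp, hr, add_comm r p, add_comm q r, add_comm p q⟩

theorem Tripod.rotate {a b c : M} : Tripod a b c → Tripod b c a := by
  rintro ⟨p, q, r, hp, hq, hr, rfl, rfl, rfl⟩
  exact ⟨q, r, p, hq, hr, hp, rfl, rfl, rfl⟩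

theorem tripod_add {a b : M} (ha : 0 ≤ a) (hb : 0 ≤ b) : Tripod a b (a + b) :=
  ⟨b, a, 0, hb, ha, le_rfl, (add_zero a).symm, (zero_add b).symm, add_comm a b⟩

theorem Tripod.nonneg [AddLeftMono M] {a b c : M} : Tripod a b c → 0 ≤ c := by
  rintro ⟨p, q, r, hp, hq, -, -, -, rfl⟩
  exact add_nonneg hp hq

end Tripod

section LinearOrderedAddCommGroup

variable {Λ : Type*} [AddCommGroup Λ] [LinearOrder Λ] [IsOrderedAddMonoid Λ]

theorem tripod_iff_eq_add_sub {a b c : Λ} :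
    Tripod a b c ↔ ∃ γ : Λ, 0 ≤ γ ∧ γ ≤ min a b ∧ c = a + b - (γ + γ) := by
  simp only [le_min_iff]
  constructor
  · rintro ⟨p, q, r, hp, hq, hr, rfl, rfl, rfl⟩
    exact ⟨r, hr, ⟨le_add_of_nonneg_left hq, le_add_of_nonneg_right hp⟩, by abel⟩
  · rintro ⟨γ, hγ, ⟨hγa, hγb⟩, rfl⟩
    exact ⟨b - γ, a - γ, γ, sub_nonneg.2 hγb, sub_nonneg.2 hγa, hγ, by abel, by abel, by abel⟩

theorem tripod_zero_iff {a c : Λ} (ha : 0 ≤ a) : Tripod a 0 c ↔ c = a := by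
  constructor
  · rintro ⟨p, q, r, hp, -, hr, rfl, h0, rfl⟩
    grind
  · rintro rfl
    simpa using tripod_add ha le_rfl

theorem exists_tripod_tripod_iff_eq_add_sub {a b c x : Λ} (ha : 0 ≤ a) (hb : 0 ≤ b) (hc : 0 ≤ c) :
    (∃ u, Tripod b c u ∧ Tripod a u x) ↔
      ∃ s : Λ, 0 ≤ s ∧ s ≤ a + b ∧ s ≤ a + c ∧ s ≤ b + c ∧ s + s ≤ a + b + c ∧
        x = a + b + c - (s + s) := by
  constructor
  · rintro ⟨u, ⟨p, q, r, hp, hq, hr, rfl, rfl, rfl⟩, ⟨p', q', r', hp', hq', hr', rfl, hu, rfl⟩⟩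
    exact ⟨r + r', by grind⟩
  · rintro ⟨s, hs, hab, hac, hbc, habc, rfl⟩
    -- the inner tripod takes as little of `s` as it can, the outer one at most `a`
    rcases le_total s a with hsa | has
    · exact ⟨b + c, tripod_add hb hc, b + c - s, a - s, s, by grind⟩
    · refine ⟨b + c - ((s - a) + (s - a)), ⟨c - (s - a), b - (s - a), s - a, by grind⟩, ?_⟩
      exact ⟨a + b + c - (s + s), 0, a, by grind⟩

theorem exists_tripod_tripod_comm {a b c x : Λ} (ha : 0 ≤ a) (hb : 0 ≤ b) (hc : 0 ≤ c) :
    (∃ u, Tripod b c u ∧ Tripod a u x) ↔ ∃ u, Tripod b a u ∧ Tripod c u x := by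
  rw [exists_tripod_tripod_iff_eq_add_sub ha hb hc, exists_tripod_tripod_iff_eq_add_sub hc hb ha]
  exact exists_congr fun s => by grind

end LinearOrderedAddCommGroup

namespace NonnegCone

section OrderedAddCommMonoid

variable {M : Type*} [AddCommMonoid M] [PartialOrder M] {a b x : {a : M // 0 ≤ a}}

def hmul (a b : {a : M // 0 ≤ a}) : Set {a : M // 0 ≤ a} :=
  {x | Tripod a.1 b.1 x.1}

theorem hmul_comm (a b : {a : M // 0 ≤ a}) : hmul a b = hmul b a :=
  Set.ext fun _ => ⟨Tripod.swap, Tripod.swap⟩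

theorem mem_hmul_iff_mem_hmul : b ∈ hmul x a ↔ x ∈ hmul b a :=
  ⟨fun h => h.rotate.swap, fun h => h.swap.rotate.rotate⟩

theorem add_mem_hmul [IsOrderedAddMonoid M] (a b : {a : M // 0 ≤ a}) : a + b ∈ hmul a b :=
  tripod_add a.2 b.2

theorem mem_hmul_add_self [IsOrderedAddMonoid M] (a b : {a : M // 0 ≤ a}) :
    b ∈ hmul (a + b) a :=
  (add_mem_hmul a b).rotate.rotate

end OrderedAddCommMonoid

variable {Λ : Type*} [AddCommGroup Λ] [LinearOrder Λ] [IsOrderedAddMonoid Λ]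
  {a b c x : {a : Λ // 0 ≤ a}}

theorem hmul_zero (a : {a : Λ // 0 ≤ a}) : hmul a 0 = {a} :=
  Set.ext fun _ => (tripod_zero_iff a.2).trans Subtype.ext_iff.symm

theorem mem_iUnion_hmul_iff :
    x ∈ ⋃ u ∈ hmul b c, hmul a u ↔ ∃ u : Λ, Tripod b.1 c.1 u ∧ Tripod a.1 u x.1 := by
  simp only [Set.mem_iUnion, exists_prop]
  exact ⟨fun ⟨u, hu, hx⟩ => ⟨u.1, hu, hx⟩, fun ⟨u, hu, hx⟩ => ⟨⟨u, hu.nonneg⟩, hu, hx⟩⟩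

theorem hmul_assoc (a b c : {a : Λ // 0 ≤ a}) :
    (⋃ u ∈ hmul b c, hmul a u) = ⋃ v ∈ hmul a b, hmul v c := by
  have hswap : (⋃ v ∈ hmul a b, hmul v c) = ⋃ v ∈ hmul b a, hmul c v := by
    rw [hmul_comm a b]
    exact Set.iUnion₂_congr fun v _ => hmul_comm v c
  ext x
  rw [hswap, mem_iUnion_hmul_iff, mem_iUnion_hmul_iff, exists_tripod_tripod_comm a.2 b.2 c.2]

variable (Λ) in
def polygroup : Polygroup {a : Λ // 0 ≤ a} where
  hmul := hmul
  e := 0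
  inv := id
  hmul_nonempty a b := ⟨a + b, add_mem_hmul a b⟩
  hmul_assoc := hmul_assoc
  repro_left a := Set.eq_univ_of_forall fun b => Set.mem_iUnion.2 ⟨a + b, mem_hmul_add_self a b⟩
  repro_right a := Set.eq_univ_of_forall fun b =>
    Set.mem_iUnion.2 ⟨a + b, hmul_comm (a + b) a ▸ mem_hmul_add_self a b⟩
  hmul_e := hmul_zero
  e_hmul a := hmul_comm 0 a ▸ hmul_zero a
  div_eq _ _ := Set.ext fun _ => mem_hmul_iff_mem_hmul
  ldiv_eq a b := Set.ext fun x => by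
    show b ∈ hmul a x ↔ x ∈ hmul a b
    rw [hmul_comm a x, mem_hmul_iff_mem_hmul, hmul_comm]

end NonnegCone

theorem nonnegCone_polygroup {Λ : Type*} [AddCommGroup Λ] [LinearOrder Λ] [IsOrderedAddMonoid Λ] :
    ∃ P : Polygroup {a : Λ // 0 ≤ a},
      (∀ α β : {a : Λ // 0 ≤ a},
        P.hmul α β =
          {x : {a : Λ // 0 ≤ a} |
            ∃ γ : Λ, 0 ≤ γ ∧ γ ≤ min α.1 β.1 ∧ x.1 = α.1 + β.1 - (γ + γ)}) ∧
      P.e = ⟨0, le_refl 0⟩ ∧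
      (∀ a : {a : Λ // 0 ≤ a}, P.inv a = a) ∧
      (∀ α β : {a : Λ // 0 ≤ a}, P.hmul α β = P.hmul β α) :=
  ⟨NonnegCone.polygroup Λ, fun _ _ => Set.ext fun _ => tripod_iff_eq_add_sub, rfl, fun _ => rfl,
    NonnegCone.hmul_comm⟩
end

section
/- Let G be a group and φ : G → Aut(G) a homomorphism. Define a binary operation on G by g₁ ∘_φ g₂ = g₁ · φ(g₁)⁻¹(g₂). Then ∘_φ is associative if and only if φ(φ(g⁻¹)(h)) = φ(g⁻¹ h g) for all g, h ∈ G. -/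
/-!
Expanding both sides, `a ∘ (b ∘ c) = (a ∘ b) · (φ b · φ a)⁻¹ c` while
`(a ∘ b) ∘ c = (a ∘ b) · φ(a ∘ b)⁻¹ c`, so `∘_φ` is associative exactly when `φ` is an anti-homomorphism from `(G, ∘_φ)` to `Aut G`.
Substituting `b ↦ φ(a) b`, this reads `φ(φ(a) b) = φ(a b) φ(a)⁻¹ = φ(a b a⁻¹)`, which is the
stated condition with `a = g⁻¹`.
-/

/-- The deformed multiplication `g₁ ∘_φ g₂ = g₁ · φ(g₁)⁻¹(g₂)`. -/
def dmul {G : Type*} [Group G] (φ : G →* MulAut G) (a b : G) : G :=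
  a * (φ a)⁻¹ b

section

variable {G : Type*} [Group G] (φ : G →* MulAut G)

theorem dmul_dmul (a b c : G) : dmul φ a (dmul φ b c) = dmul φ a b * (φ b * φ a)⁻¹ c := by
  simp only [dmul, map_mul, mul_inv_rev, MulAut.mul_apply, mul_assoc]

theorem dmul_assoc_iff_map_dmul :
    (∀ a b c : G, dmul φ a (dmul φ b c) = dmul φ (dmul φ a b) c) ↔
      ∀ a b : G, φ (dmul φ a b) = φ b * φ a := by
  refine forall₂_congr fun a b => ?_
  change (∀ c, _ = dmul φ a b * (φ (dmul φ a b))⁻¹ c) ↔ _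
  simp only [dmul_dmul, mul_right_inj]
  rw [← DFunLike.ext_iff, inv_inj, eq_comm]

theorem forall_map_dmul_iff :
    (∀ a b : G, φ (dmul φ a b) = φ b * φ a) ↔ ∀ a b : G, φ (φ a b) = φ (a * b * a⁻¹) := by
  refine forall_congr' fun a => (φ a).surjective.forall.trans (forall_congr' fun b => ?_)
  rw [dmul, MulAut.inv_apply_self, map_mul φ (a * b), map_inv, eq_mul_inv_iff_mul_eq, eq_comm]

end

theorem dmul_assoc_iff {G : Type*} [Group G] (φ : G →* MulAut G) :
    (∀ a b c : G, dmul φ a (dmul φ b c) = dmul φ (dmul φ a b) c) ↔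
      ∀ g h : G, φ ((φ (g⁻¹)) h) = φ (g⁻¹ * h * g) := by
  rw [dmul_assoc_iff_map_dmul, forall_map_dmul_iff]
  exact ⟨fun H g h => by simpa using H g⁻¹ h, fun H a b => by simpa using H a⁻¹ b⟩
end

section
/- Let G be a group and φ : G → Aut(G) an admissible action. Then the map (g, x) ↦ φ(g)(x) is an action of the group G on the deformed group G_φ by automorphisms, and the identity map G → G_φ is a bijective 1-cocycle with respect to this action: g · h = g ∘_φ φ(g)(h) for all g, h ∈ G. -/
namespace MulAut

variable {G : Type*} [Group G]

def IsAdmissible (φ : G →* MulAut G) : Prop :=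
  ∀ g h : G, φ (φ g⁻¹ h) = φ (g⁻¹ * h * g)

theorem IsAdmissible.map_apply {φ : G →* MulAut G} (hφ : IsAdmissible φ) (g x : G) :
    φ (φ g x) = conj (φ g) (φ x) := by
  simpa [mul_assoc] using hφ g⁻¹ x

theorem map_dmul_of_map_apply {φ : G →* MulAut G} {σ : MulAut G}
    (hσ : ∀ x, φ (σ x) = conj σ (φ x)) (x y : G) :
    σ (dmul φ x y) = dmul φ (σ x) (σ y) := by
  simp [dmul, hσ, mul_assoc]

end MulAut

theorem dmul_apply_self {G : Type*} [Group G] (φ : G →* MulAut G) (g h : G) :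
    dmul φ g (φ g h) = g * h := by
  simp [dmul]

theorem dmul_action_and_cocycle {G : Type*} [Group G] (φ : G →* MulAut G)
    (hadm : ∀ g h : G, φ ((φ (g⁻¹)) h) = φ (g⁻¹ * h * g)) :
    (∀ g x y : G, (φ g) (dmul φ x y) = dmul φ ((φ g) x) ((φ g) y)) ∧
    ∀ g h : G, g * h = dmul φ g ((φ g) h) :=
  ⟨fun g => MulAut.map_dmul_of_map_apply (MulAut.IsAdmissible.map_apply hadm g),
    fun g h => (dmul_apply_self φ g h).symm⟩
end

section
/- Let G be a group and φ : G → Aut(G) an admissible action. Then the map α : G ⋉ φ(G) → G_φ ⋉ φ(G) defined by (g, θ) ↦ (g, φ(g) ∘ θ) is a group isomorphism, where G ⋉ φ(G) and G_φ ⋉ φ(G) are formed with respect to the natural actions of φ(G) on G and on G_φ. -/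
section Admissible

variable {G : Type*} [Group G] (φ : G →* MulAut G)

lemma dmul_mul_apply (g h : G) (θ : MulAut G) : dmul φ g ((φ g * θ) h) = g * θ h := by
  simp [dmul]

variable {φ}

lemma map_apply_eq_conj (hadm : ∀ g h : G, φ ((φ (g⁻¹)) h) = φ (g⁻¹ * h * g)) (k h : G) :
    φ (φ k h) = φ k * φ h * (φ k)⁻¹ := by
  simpa [map_mul] using hadm k⁻¹ h

lemma map_range_apply_eq_conj (hadm : ∀ g h : G, φ ((φ (g⁻¹)) h) = φ (g⁻¹ * h * g))
    (θ : φ.range) (h : G) :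
    φ ((θ : MulAut G) h) = θ * φ h * (θ : MulAut G)⁻¹ := by
  obtain ⟨k, hk⟩ := θ.2
  rw [← hk, map_apply_eq_conj hadm]

end Admissible

theorem semidirect_iso {G : Type*} [Group G] (φ : G →* MulAut G)
    (hadm : ∀ g h : G, φ ((φ (g⁻¹)) h) = φ (g⁻¹ * h * g)) :
    ∃ α : G × φ.range ≃ G × φ.range,
      (∀ (g : G) (θ : φ.range),
        (α (g, θ)).1 = g ∧ ((α (g, θ)).2 : MulAut G) = φ g * (θ : MulAut G)) ∧
      ∀ (g₁ g₂ : G) (θ₁ θ₂ : φ.range),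
        α (g₁ * (θ₁ : MulAut G) g₂, θ₁ * θ₂) =
          (dmul φ (α (g₁, θ₁)).1
              (((α (g₁, θ₁)).2 : MulAut G) ((α (g₂, θ₂)).1)),
            (α (g₁, θ₁)).2 * (α (g₂, θ₂)).2) := by
  refine ⟨(Equiv.refl G).prodShear fun g => Equiv.mulLeft (φ.rangeRestrict g),
    fun g θ => ⟨rfl, rfl⟩, fun g₁ g₂ θ₁ θ₂ => Prod.ext ?_ (Subtype.ext ?_)⟩
  · exact (dmul_mul_apply φ g₁ g₂ θ₁).symm
  · change φ (g₁ * (θ₁ : MulAut G) g₂) * (θ₁ * θ₂ : MulAut G)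
      = φ g₁ * (θ₁ : MulAut G) * (φ g₂ * (θ₂ : MulAut G))
    rw [map_mul, map_range_apply_eq_conj hadm]
    group
end

section
/- Let G and H be groups equipped with an action of G on H by automorphisms, and let η : G → H be a bijective 1-cocycle whose inverse η⁻¹ : H → G is also a 1-cocycle with respect to an action of H on G by automorphisms. If U ≤ G is a subgroup stable under the action of H, then η(U) is a subgroup of H stable under the action of G. -/
/-!
The preimage of an invariant subgroup under a 1-cocycle is a subgroup, and `η '' U` is the
preimage of `U` under the cocycle `η⁻¹`. Comparing the two cocycle expansions of
`η⁻¹ (η (g * η⁻¹ x))` gives `η⁻¹ (ᵍx) = ^(η g)⁻¹ (η⁻¹ x)`, so `H`-stability of `U`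
yields `G`-stability of `η '' U`.
-/

def IsCocycle {G H : Type*} [Group G] [Group H] (ω : G →* MulAut H) (f : G → H) : Prop :=
  ∀ g₁ g₂ : G, f (g₁ * g₂) = f g₁ * ω g₁ (f g₂)

namespace IsCocycle

variable {G H : Type*} [Group G] [Group H] {ω : G →* MulAut H} {f : G → H}

theorem map_one (hf : IsCocycle ω f) : f 1 = 1 := by
  simpa using hf 1 1

theorem map_inv (hf : IsCocycle ω f) (g : G) : f g⁻¹ = ω g⁻¹ (f g)⁻¹ := by
  have h : f g * ω g (f g⁻¹) = 1 := by rw [← hf, mul_inv_cancel, hf.map_one]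
  rw [_root_.map_inv ω, MulAut.inv_apply, ← eq_inv_of_mul_eq_one_right h,
    MulEquiv.symm_apply_apply]

def comapSubgroup (hf : IsCocycle ω f) (U : Subgroup H) (hU : ∀ g, ∀ u ∈ U, ω g u ∈ U) :
    Subgroup G where
  carrier := f ⁻¹' U
  one_mem' := by simp [Set.mem_preimage, hf.map_one, U.one_mem]
  mul_mem' {a b} ha hb := by
    simp only [Set.mem_preimage, SetLike.mem_coe, hf a b] at *
    exact U.mul_mem ha (hU a _ hb)
  inv_mem' {a} ha := by
    simp only [Set.mem_preimage, SetLike.mem_coe, hf.map_inv a] at *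
    exact hU _ _ (U.inv_mem ha)

theorem coe_comapSubgroup (hf : IsCocycle ω f) (U : Subgroup H)
    (hU : ∀ g, ∀ u ∈ U, ω g u ∈ U) : (hf.comapSubgroup U hU : Set G) = f ⁻¹' U :=
  rfl

end IsCocycle

theorem symm_apply_of_isCocycle {G H : Type*} [Group G] [Group H]
    {ωG : G →* MulAut H} {ωH : H →* MulAut G} {η : G ≃ H}
    (hη : IsCocycle ωG η) (hη' : IsCocycle ωH η.symm) (g : G) (x : H) :
    η.symm (ωG g x) = ωH (η g)⁻¹ (η.symm x) := by
  have h : g * η.symm x = g * ωH (η g) (η.symm (ωG g x)) := by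
    conv_lhs => rw [← η.symm_apply_apply (g * η.symm x), hη, η.apply_symm_apply]
    rw [hη', η.symm_apply_apply]
  rw [map_inv ωH, MulAut.inv_apply, mul_left_cancel h, MulEquiv.symm_apply_apply]

theorem cocycle_image_subgroup {G H : Type*} [Group G] [Group H]
    (ωG : G →* MulAut H) (ωH : H →* MulAut G) (η : G ≃ H)
    (hη : ∀ g₁ g₂ : G, η (g₁ * g₂) = η g₁ * (ωG g₁) (η g₂))
    (hη' : ∀ h₁ h₂ : H, η.symm (h₁ * h₂) = η.symm h₁ * (ωH h₁) (η.symm h₂))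
    (U : Subgroup G) (hU : ∀ h : H, ∀ u ∈ U, (ωH h) u ∈ U) :
    ∃ K : Subgroup H, (K : Set H) = ⇑η '' (U : Set G) ∧
      ∀ g : G, ∀ x ∈ K, (ωG g) x ∈ K := by
  have hsymm : IsCocycle ωH η.symm := hη'
  refine ⟨hsymm.comapSubgroup U hU, ?_, fun g x hx => ?_⟩
  · rw [hsymm.coe_comapSubgroup, η.image_eq_preimage_symm]
  · change η.symm (ωG g x) ∈ U
    rw [symm_apply_of_isCocycle hη hsymm]
    exact hU _ _ hx
end

section
/- Let G and H be groups with actions by automorphisms of each on the other, and let η : G → H be a bijective 1-cocycle with η⁻¹ ∈ Z¹(H, G). Then the kernel Δ of the homomorphism ω_G : G → Aut(H) defining the action of G on H is stable under the action of H on G. -/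
/-! Since `η` is a bijective cocycle, `g ∈ ker ωG` exactly when `η (g * g') = η g * η g'` for all
`g'`. The cocycle identity for `η⁻¹` shows that `η` intertwines the automorphism `ωH h` of `G`
with the automorphism `(ωG (η⁻¹ h))⁻¹` of `H`, and any intertwined automorphism preserves this
left-multiplicativity. -/

section Cocycle

variable {G H : Type*} [Group G] [Group H]

theorem mem_ker_iff_map_mul_right {ωG : G →* MulAut H} {η : G → H}
    (hη : ∀ g₁ g₂ : G, η (g₁ * g₂) = η g₁ * (ωG g₁) (η g₂)) (hsurj : Function.Surjective η)
    (g : G) : g ∈ ωG.ker ↔ ∀ g' : G, η (g * g') = η g * η g' := by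
  refine ⟨fun hg g' => by rw [hη, MonoidHom.mem_ker.mp hg, MulAut.one_apply], fun hmul => ?_⟩
  refine MonoidHom.mem_ker.mpr (MulEquiv.ext fun k => ?_)
  obtain ⟨g', rfl⟩ := hsurj k
  simpa [hmul] using (hη g g').symm

theorem map_ωH_apply {ωG : G →* MulAut H} {ωH : H →* MulAut G} {η : G ≃ H}
    (hη : ∀ g₁ g₂ : G, η (g₁ * g₂) = η g₁ * (ωG g₁) (η g₂))
    (hη' : ∀ h₁ h₂ : H, η.symm (h₁ * h₂) = η.symm h₁ * (ωH h₁) (η.symm h₂)) (h : H) (g : G) :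
    η ((ωH h) g) = (ωG (η.symm h))⁻¹ (η g) := by
  -- the cocycle identity of `η⁻¹` at `(h, η g)`, pushed through `η`
  have hcomp : h * η g = h * (ωG (η.symm h)) (η ((ωH h) g)) := by
    rw [← η.apply_symm_apply (h * η g), hη', η.symm_apply_apply, hη, η.apply_symm_apply]
  rw [mul_left_cancel hcomp, MulAut.inv_apply_self]

end Cocycle

theorem map_mul_right_of_intertwine {G H : Type*} [Group G] [Mul H] {η : G → H}
    (σ : G ≃* G) (τ : H ≃* H) (hστ : ∀ x, η (σ x) = τ (η x)) {g : G}
    (hg : ∀ g' : G, η (g * g') = η g * η g') (g' : G) :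
    η (σ g * g') = η (σ g) * η g' :=
  calc η (σ g * g') = η (σ (g * σ.symm g')) := by rw [map_mul, σ.apply_symm_apply]
    _ = τ (η g) * τ (η (σ.symm g')) := by rw [hστ, hg, map_mul]
    _ = η (σ g) * η g' := by rw [← hστ, ← hστ, σ.apply_symm_apply]

theorem cocycle_ker_stable {G H : Type*} [Group G] [Group H]
    (ωG : G →* MulAut H) (ωH : H →* MulAut G) (η : G ≃ H)
    (hη : ∀ g₁ g₂ : G, η (g₁ * g₂) = η g₁ * (ωG g₁) (η g₂))
    (hη' : ∀ h₁ h₂ : H, η.symm (h₁ * h₂) = η.symm h₁ * (ωH h₁) (η.symm h₂)) :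
    ∀ h : H, ∀ g ∈ ωG.ker, (ωH h) g ∈ ωG.ker := by
  intro h g hg
  rw [mem_ker_iff_map_mul_right hη η.surjective] at hg ⊢
  exact map_mul_right_of_intertwine (ωH h) (ωG (η.symm h))⁻¹ (map_ωH_apply hη hη' h) hg
end

section
/- The dihedral group D₈ of order 8 and the quaternion group Q₈ form a deformation pair: there exists an admissible action φ : D₈ → Aut(D₈) such that the deformed group (D₈)_φ, with multiplication g₁ ∘_φ g₂ = g₁ · φ(g₁)⁻¹(g₂), is isomorphic to the quaternion group Q₈. -/
theorem admissible_of_commute_of_map_apply {G : Type*} [Group G] (φ : G →* MulAut G)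
    (hcomm : ∀ g h, Commute (φ g) (φ h)) (hinv : ∀ g h, φ (φ g h) = φ h) (g h : G) :
    φ (φ g⁻¹ h) = φ (g⁻¹ * h * g) := by
  rw [hinv, map_mul, map_mul, (hcomm g⁻¹ h).eq, map_inv, inv_mul_cancel_right]

lemma ZMod.natCast_add_self_two_mul (n : ℕ) : (n + n : ZMod (2 * n)) = 0 := by
  rw [← two_mul]
  exact_mod_cast ZMod.natCast_self (2 * n)

namespace DihedralGroup

variable {m : ℕ}

def shiftRefl (k : ZMod m) : MulAut (DihedralGroup m) where
  toFun
    | r i => r i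
    | sr i => sr (i + k)
  invFun
    | r i => r i
    | sr i => sr (i - k)
  left_inv g := by cases g <;> simp
  right_inv g := by cases g <;> simp
  map_mul' g h := by
    cases g <;> cases h <;> simp only [r_mul_r, r_mul_sr, sr_mul_r, sr_mul_sr] <;> ring_nf

@[simp] lemma shiftRefl_r (k i : ZMod m) : shiftRefl k (r i) = r i := rfl

@[simp] lemma shiftRefl_sr (k i : ZMod m) : shiftRefl k (sr i) = sr (i + k) := rfl

@[simp] lemma shiftRefl_symm_r (k i : ZMod m) : (shiftRefl k)⁻¹ (r i) = r i := rfl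

@[simp] lemma shiftRefl_symm_sr (k i : ZMod m) : (shiftRefl k)⁻¹ (sr i) = sr (i - k) := rfl

lemma shiftRefl_mul (k l : ZMod m) : shiftRefl k * shiftRefl l = shiftRefl (k + l) := by
  ext g
  cases g
  · rfl
  · exact congrArg sr (by rw [add_assoc, add_comm l])

lemma commute_shiftRefl (k l : ZMod m) : Commute (shiftRefl k) (shiftRefl l) := by
  rw [Commute, SemiconjBy, shiftRefl_mul, shiftRefl_mul, add_comm]

lemma shiftRefl_zero : shiftRefl (0 : ZMod m) = 1 := by
  ext g
  cases g <;> simp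

def reflectionShiftAction (n : ℕ) : DihedralGroup (2 * n) →* MulAut (DihedralGroup (2 * n)) where
  toFun
    | r _ => 1
    | sr _ => shiftRefl n
  map_one' := rfl
  map_mul' g h := by
    cases g <;> cases h <;>
      simp only [r_mul_r, r_mul_sr, sr_mul_r, sr_mul_sr, shiftRefl_mul,
        ZMod.natCast_add_self_two_mul, shiftRefl_zero, one_mul, mul_one]

def equivQuaternionGroup (n : ℕ) : DihedralGroup (2 * n) ≃ QuaternionGroup n where
  toFun
    | r i => .a i
    | sr i => .xa i
  invFun
    | .a i => r i
    | .xa i => sr i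
  left_inv g := by cases g <;> rfl
  right_inv g := by cases g <;> rfl

variable {n : ℕ}

@[simp] lemma reflectionShiftAction_r (i : ZMod (2 * n)) : reflectionShiftAction n (r i) = 1 := rfl

@[simp] lemma reflectionShiftAction_sr (i : ZMod (2 * n)) :
    reflectionShiftAction n (sr i) = shiftRefl n := rfl

lemma reflectionShiftAction_eq_shiftRefl (g : DihedralGroup (2 * n)) :
    ∃ k, reflectionShiftAction n g = shiftRefl k := by
  cases g
  · exact ⟨0, shiftRefl_zero.symm⟩
  · exact ⟨n, rfl⟩

lemma reflectionShiftAction_shiftRefl (k : ZMod (2 * n)) (g : DihedralGroup (2 * n)) :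
    reflectionShiftAction n (shiftRefl k g) = reflectionShiftAction n g := by
  cases g <;> rfl

theorem reflectionShiftAction_admissible (g h : DihedralGroup (2 * n)) :
    reflectionShiftAction n (reflectionShiftAction n g⁻¹ h) =
      reflectionShiftAction n (g⁻¹ * h * g) := by
  refine admissible_of_commute_of_map_apply _ (fun g h => ?_) (fun g h => ?_) g h
  · obtain ⟨k, hk⟩ := reflectionShiftAction_eq_shiftRefl g
    obtain ⟨l, hl⟩ := reflectionShiftAction_eq_shiftRefl h
    rw [hk, hl]
    exact commute_shiftRefl k l
  · obtain ⟨k, hk⟩ := reflectionShiftAction_eq_shiftRefl g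
    rw [hk, reflectionShiftAction_shiftRefl]

@[simp] lemma equivQuaternionGroup_r (i : ZMod (2 * n)) : equivQuaternionGroup n (r i) = .a i := rfl

@[simp] lemma equivQuaternionGroup_sr (i : ZMod (2 * n)) :
    equivQuaternionGroup n (sr i) = .xa i := rfl

theorem equivQuaternionGroup_dmul (g h : DihedralGroup (2 * n)) :
    equivQuaternionGroup n (dmul (reflectionShiftAction n) g h) =
      equivQuaternionGroup n g * equivQuaternionGroup n h := by
  cases g <;> cases h <;>
    simp only [dmul, reflectionShiftAction_r, reflectionShiftAction_sr, inv_one,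
      MulAut.one_apply, shiftRefl_symm_r, shiftRefl_symm_sr, equivQuaternionGroup_r,
      equivQuaternionGroup_sr, r_mul_r, r_mul_sr, sr_mul_r, sr_mul_sr,
      QuaternionGroup.a_mul_a, QuaternionGroup.a_mul_xa, QuaternionGroup.xa_mul_a,
      QuaternionGroup.xa_mul_xa]
  case sr.sr i j =>
    exact congrArg QuaternionGroup.a (by linear_combination -ZMod.natCast_add_self_two_mul n)

end DihedralGroup

theorem dihedral_quaternion_deformation :
    ∃ φ : DihedralGroup 4 →* MulAut (DihedralGroup 4),
      (∀ g h : DihedralGroup 4, φ ((φ (g⁻¹)) h) = φ (g⁻¹ * h * g)) ∧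
      ∃ e : DihedralGroup 4 ≃ QuaternionGroup 2,
        ∀ g₁ g₂ : DihedralGroup 4, e (dmul φ g₁ g₂) = e g₁ * e g₂ :=
  ⟨DihedralGroup.reflectionShiftAction 2, DihedralGroup.reflectionShiftAction_admissible (n := 2),
    DihedralGroup.equivQuaternionGroup 2, DihedralGroup.equivQuaternionGroup_dmul (n := 2)⟩
end
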